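/- In the σ-scaled federated setting, suppose ‖w_{k,c,r}(t) − u_r(0)‖₂ ≤ R := C·n·√(log(m/δ)·log²(n/δ))/(λ·√m) for all r ∈ [m], k ∈ [K], c ∈ [N] (for a sufficiently small constant C > 0). Then with probability at least 1 − n·exp(−m·(R/σ + δ)/10) over the random initialization, ‖J(k,t) − J(0,0)‖_F ≤ O(n·(δ + n·√(log(m/δ)·log²(n/δ))/(σ·λ·√m)))^{1/2}. -/

import Mathlib

open MeasureTheory ProbabilityTheory Real
open scoped BigOperators ENNReal NNReal ProbabilityTheory

noncomputable section

/-- real indicator of `0 ≤ z` -/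
def posInd (z : ℝ) : ℝ := if 0 ≤ z then 1 else 0

/-- real indicator of `z ≤ c` -/
def leInd (z c : ℝ) : ℝ := if z ≤ c then 1 else 0

/-- euclidean inner product -/
def dot {α : Type*} [Fintype α] (u v : α → ℝ) : ℝ := ∑ i, u i * v i

/-- euclidean norm -/
def norm2 {α : Type*} [Fintype α] (v : α → ℝ) : ℝ := Real.sqrt (∑ i, v i ^ 2)

/-- ReLU -/
def relu (z : ℝ) : ℝ := max z 0

/-- one-hidden-layer ReLU network -/
def fnet {d : ℕ} (m : ℕ) (a : Fin m → ℝ) (u : Fin m → Fin d → ℝ) (x : Fin d → ℝ) : ℝ :=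
  (Real.sqrt m)⁻¹ * ∑ r, a r * relu (dot (u r) x)

/-- Frobenius norm -/
def frobG {α β : Type*} [Fintype α] [Fintype β] (M : Matrix α β ℝ) : ℝ :=
  Real.sqrt (∑ p, ∑ q, M p q ^ 2)

/-- minimal Rayleigh quotient (for symmetric `H` this is the least eigenvalue) -/
def eigMin {n : ℕ} (H : Matrix (Fin n) (Fin n) ℝ) : ℝ :=
  sInf {r : ℝ | ∃ v : Fin n → ℝ, ∑ i, v i ^ 2 = 1 ∧ r = ∑ i, ∑ j, v i * H i j * v j}

/-- maximal Rayleigh quotient (for symmetric `H` this is the largest eigenvalue) -/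
def eigMax {n : ℕ} (H : Matrix (Fin n) (Fin n) ℝ) : ℝ :=
  sSup {r : ℝ | ∃ v : Fin n → ℝ, ∑ i, v i ^ 2 = 1 ∧ r = ∑ i, ∑ j, v i * H i j * v j}

/-- condition number -/
def condNum {n : ℕ} (H : Matrix (Fin n) (Fin n) ℝ) : ℝ := eigMax H / eigMin H

/-- asymmetric Gram matrix built from two weight families -/
def gram2 {d : ℕ} (m n : ℕ) (x : Fin n → Fin d → ℝ)
    (wt wh : Fin m → Fin d → ℝ) : Matrix (Fin n) (Fin n) ℝ :=
  fun i j => (m : ℝ)⁻¹ * dot (x i) (x j) *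
    ∑ r, posInd (dot (wt r) (x i)) * posInd (dot (wh r) (x j))

/-- Gram matrix at a single weight family -/
def gram0 {d : ℕ} (m n : ℕ) (x : Fin n → Fin d → ℝ) (u : Fin m → Fin d → ℝ) :
    Matrix (Fin n) (Fin n) ℝ := gram2 m n x u u

/-- standard gaussian `N(0, I_d)` on `ℝ^d` -/
def stdGaussianPi (d : ℕ) : Measure (Fin d → ℝ) := Measure.pi fun _ => gaussianReal 0 1

/-- i.i.d. family of `m` standard gaussians on `ℝ^d` -/
def iidGaussian (m d : ℕ) : Measure (Fin m → Fin d → ℝ) := Measure.pi fun _ => stdGaussianPi d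

/-- gaussian `N(0, σ² I_d)` on `ℝ^d` -/
def scaledGaussianPi (d : ℕ) (σ : ℝ) : Measure (Fin d → ℝ) :=
  Measure.pi fun _ => gaussianReal 0 (Real.toNNReal (σ ^ 2))

/-- i.i.d. family of `m` scaled gaussians on `ℝ^d` -/
def iidScaledGaussian (m d : ℕ) (σ : ℝ) : Measure (Fin m → Fin d → ℝ) :=
  Measure.pi fun _ => scaledGaussianPi d σ

/-- uniform measure on `{−1, +1}` -/
def pmUniform : Measure ℝ :=
  ((1 : ℝ≥0) / 2) • Measure.dirac (1 : ℝ) + ((1 : ℝ≥0) / 2) • Measure.dirac (-1 : ℝ)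

/-- i.i.d. family of `m` uniform signs -/
def iidSign (m : ℕ) : Measure (Fin m → ℝ) := Measure.pi fun _ => pmUniform

/-- NTK matrix `H^∞` -/
def Hinf (d n : ℕ) (x : Fin n → Fin d → ℝ) : Matrix (Fin n) (Fin n) ℝ :=
  fun i j => ∫ w, dot (x i) (x j) * posInd (dot w (x i)) * posInd (dot w (x j)) ∂(stdGaussianPi d)

open Classical in
/-- the set `Q_i` of neurons whose activation pattern at `xi` is stable under
`R`-perturbations of the initialization -/
def Qset {d : ℕ} (m : ℕ) (R : ℝ) (u0 : Fin m → Fin d → ℝ) (xi : Fin d → ℝ) : Finset (Fin m) :=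
  Finset.univ.filter fun r =>
    ∀ w : Fin d → ℝ, norm2 (fun i => w i - u0 r i) ≤ R →
      ((0 ≤ dot w xi) ↔ (0 ≤ dot (u0 r) xi))

/-- the matrix `J` of per-example gradients, one weight family per column -/
def Jmat {d : ℕ} (m n : ℕ) (a : Fin m → ℝ) (x : Fin n → Fin d → ℝ)
    (W : Fin n → Fin m → Fin d → ℝ) : Matrix (Fin m × Fin d) (Fin n) ℝ :=
  fun p i => (Real.sqrt m)⁻¹ * a p.1 * x i p.2 * posInd (dot (W i p.1) (x i))

lemma pdf_form (v w : ℝ≥0) (hv : v ≠ 0) (hw : w ≠ 0) (y : ℝ) :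
    (fun x => gaussianPDFReal 0 v x * gaussianPDFReal x w y)
      = fun x => ((Real.sqrt (2*π*v))⁻¹ * (Real.sqrt (2*π*w))⁻¹ *
          Real.exp (-(y)^2/(2*((v:ℝ)+w)))) *
        Real.exp (-(((v:ℝ)+w)/(2*v*w)) * (x - v*y/((v:ℝ)+w))^2) := by
  have hv' : (0:ℝ) < v := lt_of_le_of_ne (v.coe_nonneg) (by exact_mod_cast (Ne.symm hv))
  have hw' : (0:ℝ) < w := lt_of_le_of_ne (w.coe_nonneg) (by exact_mod_cast (Ne.symm hw))
  funext x
  simp only [gaussianPDFReal]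
  rw [mul_mul_mul_comm, ← Real.exp_add]
  conv_rhs => rw [mul_assoc, ← Real.exp_add]
  congr 2
  field_simp
  ring

lemma pdf_conv (v w : ℝ≥0) (hv : v ≠ 0) (hw : w ≠ 0) (y : ℝ) :
    ∫ x, gaussianPDFReal 0 v x * gaussianPDFReal x w y = gaussianPDFReal 0 (v+w) y := by
  have hv' : (0:ℝ) < v := lt_of_le_of_ne (v.coe_nonneg) (by exact_mod_cast (Ne.symm hv))
  have hw' : (0:ℝ) < w := lt_of_le_of_ne (w.coe_nonneg) (by exact_mod_cast (Ne.symm hw))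
  have hb : (0:ℝ) < ((v:ℝ)+w)/(2*v*w) := by positivity
  rw [pdf_form v w hv hw y]
  rw [integral_const_mul]
  have hshift : ∫ x, Real.exp (-(((v:ℝ)+w)/(2*v*w)) * (x - v*y/((v:ℝ)+w))^2)
      = ∫ x, Real.exp (-(((v:ℝ)+w)/(2*v*w)) * x^2) := by
    exact integral_sub_right_eq_self (fun x => Real.exp (-(((v:ℝ)+w)/(2*v*w)) * x^2)) _
  rw [hshift, integral_gaussian]
  simp only [gaussianPDFReal, sub_zero, zero_sub, neg_neg]
  rw [mul_comm, ← mul_assoc]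
  have hva : (0:ℝ) ≤ 2*π*v := by positivity
  have hwa : (0:ℝ) ≤ 2*π*w := by positivity
  have key : Real.sqrt (π / (((v:ℝ)+w)/(2*v*w))) * ((Real.sqrt (2*π*v))⁻¹ * (Real.sqrt (2*π*w))⁻¹)
      = (Real.sqrt (2*π*((v:ℝ)+w)))⁻¹ := by
    rw [← Real.sqrt_inv, ← Real.sqrt_inv, ← Real.sqrt_mul (by positivity),
      ← Real.sqrt_mul (by positivity), ← Real.sqrt_inv]
    congr 1
    field_simp
  rw [key]
  push_cast
  ring_nf

lemma integrable_pdf_conv (v w : ℝ≥0) (hv : v ≠ 0) (hw : w ≠ 0) (y : ℝ) :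
    Integrable (fun x => gaussianPDFReal 0 v x * gaussianPDFReal x w y) := by
  have hv' : (0:ℝ) < v := lt_of_le_of_ne (v.coe_nonneg) (by exact_mod_cast (Ne.symm hv))
  have hw' : (0:ℝ) < w := lt_of_le_of_ne (w.coe_nonneg) (by exact_mod_cast (Ne.symm hw))
  rw [pdf_form v w hv hw y]
  have hb : (0:ℝ) < ((v:ℝ)+w)/(2*v*w) := by positivity
  have : Integrable (fun x : ℝ => Real.exp (-(((v:ℝ)+w)/(2*v*w)) * (x - v*y/((v:ℝ)+w))^2)) := by
    have := (integrable_exp_neg_mul_sq hb).comp_sub_right (v*y/((v:ℝ)+w))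
    simpa using this
  exact this.const_mul _

lemma gauss_conv (v w : ℝ≥0) :
    ((gaussianReal 0 v).prod (gaussianReal 0 w)).map (fun p : ℝ × ℝ => p.1 + p.2)
      = gaussianReal 0 (v + w) := by
  by_cases hv : v = 0
  · subst hv
    rw [gaussianReal_zero_var, Measure.dirac_prod, Measure.map_map measurable_add measurable_prodMk_left]
    simp only [zero_add]
    have : ((fun p : ℝ × ℝ => p.1 + p.2) ∘ Prod.mk (0:ℝ)) = id := by funext z; simp
    rw [this, Measure.map_id]
  by_cases hw : w = 0
  · subst hw
    rw [gaussianReal_zero_var, Measure.prod_dirac, Measure.map_map measurable_add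
      measurable_prodMk_right]
    have : ((fun p : ℝ × ℝ => p.1 + p.2) ∘ (fun x : ℝ => (x, (0:ℝ)))) = id := by funext z; simp
    rw [this, Measure.map_id, add_zero]
  have hvw : v + w ≠ 0 := by simp [hv]
  ext s hs
  rw [Measure.map_apply measurable_add hs, Measure.prod_apply (measurable_add hs)]
  have h1 : ∀ x : ℝ, gaussianReal 0 w (Prod.mk x ⁻¹' ((fun p : ℝ × ℝ => p.1 + p.2) ⁻¹' s))
      = ∫⁻ z in s, gaussianPDF x w z := by
    intro x
    have hpre : Prod.mk x ⁻¹' ((fun p : ℝ × ℝ => p.1 + p.2) ⁻¹' s) = (fun z => x + z) ⁻¹' s := rfl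
    rw [hpre, ← Measure.map_apply (measurable_const_add x) hs, gaussianReal_map_const_add,
      zero_add, gaussianReal_apply _ hw]
  rw [lintegral_congr h1]
  have hmeas_inner : Measurable fun x : ℝ => ∫⁻ z in s, gaussianPDF x w z := by
    have : Measurable (fun q : ℝ × ℝ => gaussianPDF q.1 w q.2) := by
      unfold gaussianPDF gaussianPDFReal
      exact (((measurable_snd.sub measurable_fst).pow_const 2).neg.div_const _).exp.const_mul
        _ |>.ennreal_ofReal
    exact this.lintegral_prod_right'
  rw [gaussianReal_of_var_ne_zero _ hv,
    lintegral_withDensity_eq_lintegral_mul _ (measurable_gaussianPDF _ _) hmeas_inner]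
  have h2 : ∀ x : ℝ, gaussianPDF 0 v x * ∫⁻ z in s, gaussianPDF x w z
      = ∫⁻ z in s, gaussianPDF 0 v x * gaussianPDF x w z := by
    intro x
    rw [lintegral_const_mul]
    unfold gaussianPDF gaussianPDFReal
    exact (((measurable_id.sub_const _).pow_const 2).neg.div_const _).exp.const_mul
      _ |>.ennreal_ofReal
  simp only [Pi.mul_apply]
  rw [lintegral_congr h2]
  rw [lintegral_lintegral_swap]
  · have h3 : ∀ z : ℝ, ∫⁻ x, gaussianPDF 0 v x * gaussianPDF x w z = gaussianPDF 0 (v + w) z := by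
      intro z
      unfold gaussianPDF
      have hnn : 0 ≤ᵐ[volume] fun x => gaussianPDFReal 0 v x * gaussianPDFReal x w z :=
        ae_of_all _ fun x => mul_nonneg (gaussianPDFReal_nonneg _ _ _) (gaussianPDFReal_nonneg _ _ _)
      calc ∫⁻ x, ENNReal.ofReal (gaussianPDFReal 0 v x) * ENNReal.ofReal (gaussianPDFReal x w z)
          = ∫⁻ x, ENNReal.ofReal (gaussianPDFReal 0 v x * gaussianPDFReal x w z) := by
            simp_rw [ENNReal.ofReal_mul (gaussianPDFReal_nonneg 0 v _)]
        _ = ENNReal.ofReal (∫ x, gaussianPDFReal 0 v x * gaussianPDFReal x w z) :=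
            (ofReal_integral_eq_lintegral_ofReal (integrable_pdf_conv v w hv hw z) hnn).symm
        _ = ENNReal.ofReal (gaussianPDFReal 0 (v+w) z) := by rw [pdf_conv v w hv hw z]
    simp_rw [h3]
    rw [gaussianReal_apply _ hvw]
  · apply Measurable.aemeasurable
    have : Measurable (fun q : ℝ × ℝ => gaussianPDF 0 v q.1 * gaussianPDF q.1 w q.2) := by
      unfold gaussianPDF gaussianPDFReal
      refine Measurable.fun_mul ?_ ?_
      · exact ((((measurable_fst.sub_const _).pow_const 2).neg.div_const _).exp.const_mul
          _).ennreal_ofReal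
      · exact ((((measurable_snd.sub measurable_fst).pow_const 2).neg.div_const _).exp.const_mul
          _).ennreal_ofReal
    exact this

lemma gauss_lin : ∀ (d : ℕ) (c : Fin d → ℝ) (s : ℝ≥0),
    (Measure.pi fun _ : Fin d => gaussianReal 0 s).map (fun v => ∑ j, c j * v j)
      = gaussianReal 0 (Real.toNNReal (∑ j, (c j)^2) * s) := by
  intro d
  induction d with
  | zero =>
    intro c s
    have h0 : (fun v : Fin 0 → ℝ => ∑ j, c j * v j) = fun _ => (0:ℝ) := by
      funext v; simp
    rw [h0, Measure.map_const]
    simp [Measure.pi_univ]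
  | succ d ih =>
    intro c s
    set e := MeasurableEquiv.piFinSuccAbove (fun _ : Fin (d+1) => ℝ) 0 with he_def
    have hmp := measurePreserving_piFinSuccAbove (fun _ : Fin (d+1) => gaussianReal 0 s) 0
    set f₁ : ℝ → ℝ := fun x => c 0 * x with hf₁
    set f₂ : (Fin d → ℝ) → ℝ := fun y => ∑ j : Fin d, c j.succ * y j with hf₂
    have hf₁m : Measurable f₁ := (measurable_id.const_mul _)
    have hf₂m : Measurable f₂ := by
      apply Finset.measurable_sum
      intro j _
      exact (measurable_pi_apply j).const_mul _
    have hFdecomp : (fun v : Fin (d+1) → ℝ => ∑ j, c j * v j)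
        = (fun q : ℝ × ℝ => q.1 + q.2) ∘ (Prod.map f₁ f₂) ∘ e := by
      funext v
      simp only [Function.comp_apply, he_def, MeasurableEquiv.piFinSuccAbove_apply, Prod.map,
        Fin.sum_univ_succ, hf₁, hf₂, Fin.insertNthEquiv, Equiv.coe_fn_symm_mk,
        Fin.removeNth]
      simp [Fin.succAbove_zero, Fin.tail]
    rw [hFdecomp, ← Function.comp_assoc]
    rw [← Measure.map_map (measurable_add.comp (hf₁m.prodMap hf₂m)) e.measurable]
    rw [hmp.map_eq]
    rw [← Measure.map_map measurable_add (hf₁m.prodMap hf₂m)]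
    rw [← Measure.map_prod_map _ _ hf₁m hf₂m]
    have hm1 : (gaussianReal 0 s).map f₁ = gaussianReal 0 (NNReal.mk ((c 0)^2) (sq_nonneg _) * s) := by
      rw [hf₁]
      have := gaussianReal_map_const_mul (μ := 0) (v := s) (c 0)
      simpa using this
    have hm2 : (Measure.pi fun _ : Fin d => gaussianReal 0 s).map f₂
        = gaussianReal 0 (Real.toNNReal (∑ j : Fin d, (c j.succ)^2) * s) := ih _ s
    rw [hm1, hm2, gauss_conv]
    congr 1
    rw [← NNReal.coe_inj]
    push_cast
    rw [Real.coe_toNNReal _ (Finset.sum_nonneg fun j _ => sq_nonneg _),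
      Real.coe_toNNReal _ (Finset.sum_nonneg fun j _ => sq_nonneg _)]
    rw [Fin.sum_univ_succ]
    ring

lemma gauss_slab {v : ℝ≥0} (hv : v ≠ 0) {R : ℝ} (hR : 0 ≤ R) :
    gaussianReal 0 v {x : ℝ | |x| ≤ R} ≤ ENNReal.ofReal (R / Real.sqrt v) := by
  have hv' : (0:ℝ) < v := lt_of_le_of_ne (v.coe_nonneg) (by exact_mod_cast (Ne.symm hv))
  have hset : {x : ℝ | |x| ≤ R} = Set.Icc (-R) R := by
    ext z; simp [abs_le]
  rw [hset, gaussianReal_apply_eq_integral _ hv]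
  apply ENNReal.ofReal_le_ofReal
  have hpdf_le : ∀ x : ℝ, gaussianPDFReal 0 v x ≤ (Real.sqrt (2*π*v))⁻¹ := by
    intro x
    unfold gaussianPDFReal
    calc (Real.sqrt (2*π*v))⁻¹ * Real.exp (-(x-0)^2/(2*v))
        ≤ (Real.sqrt (2*π*v))⁻¹ * 1 := by
          apply mul_le_mul_of_nonneg_left _ (by positivity)
          rw [Real.exp_le_one_iff]
          apply div_nonpos_of_nonpos_of_nonneg (neg_nonpos_of_nonneg (sq_nonneg _)) (by positivity)
      _ = (Real.sqrt (2*π*v))⁻¹ := mul_one _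
  calc ∫ x in Set.Icc (-R) R, gaussianPDFReal 0 v x
      ≤ ∫ _x in Set.Icc (-R) R, (Real.sqrt (2*π*v))⁻¹ := by
        apply setIntegral_mono_on (integrable_gaussianPDFReal 0 v).integrableOn
          (integrableOn_const (by simp [Real.volume_Icc]))
          measurableSet_Icc
        intro x _
        exact hpdf_le x
    _ = (volume (Set.Icc (-R) R)).toReal * (Real.sqrt (2*π*v))⁻¹ := by
        rw [setIntegral_const]; rfl
    _ = (2*R) * (Real.sqrt (2*π*v))⁻¹ := by
        rw [Real.volume_Icc, ENNReal.toReal_ofReal (by linarith)]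
        ring_nf
    _ ≤ R / Real.sqrt v := by
        rw [Real.sqrt_mul (by positivity), div_eq_mul_inv]
        rw [mul_inv]
        rw [← mul_assoc]
        apply mul_le_mul_of_nonneg_right _ (by positivity)
        have h2 : (2:ℝ) ≤ Real.sqrt (2*π) := by
          have h4 : (4:ℝ) ≤ 2*π := by nlinarith [Real.pi_gt_three]
          nlinarith [Real.sq_sqrt (show (0:ℝ) ≤ 2*π by positivity),
            Real.sqrt_nonneg (2*π)]
        calc 2*R*(Real.sqrt (2*π))⁻¹ ≤ 2*R*2⁻¹ := by
              apply mul_le_mul_of_nonneg_left _ (by positivity)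
              apply inv_anti₀ (by norm_num) h2
          _ = R := by ring

lemma lintegral_pi_prod {α : Type*} [MeasurableSpace α] (μ₁ : Measure α) [IsProbabilityMeasure μ₁]
    (f : α → ℝ≥0∞) (hf : Measurable f) :
    ∀ m : ℕ, ∫⁻ u, ∏ r : Fin m, f (u r) ∂(Measure.pi fun _ : Fin m => μ₁)
      = (∫⁻ a, f a ∂μ₁) ^ m := by
  intro m
  induction m with
  | zero => simp
  | succ m ih =>
    have hmp := measurePreserving_piFinSuccAbove (fun _ : Fin (m+1) => μ₁) 0
    set g : α × (Fin m → α) → ℝ≥0∞ := fun p => f p.1 * ∏ r : Fin m, f (p.2 r) with hg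
    have hgm : Measurable g := by
      apply Measurable.mul (hf.comp measurable_fst)
      apply Finset.measurable_prod
      intro r _
      exact hf.comp ((measurable_pi_apply r).comp measurable_snd)
    have hcomp : ∀ u : Fin (m+1) → α,
        g (MeasurableEquiv.piFinSuccAbove (fun _ : Fin (m+1) => α) 0 u)
          = ∏ r : Fin (m+1), f (u r) := by
      intro u
      simp only [hg, MeasurableEquiv.piFinSuccAbove_apply, Fin.insertNthEquiv,
        Equiv.coe_fn_symm_mk, Fin.removeNth, Fin.prod_univ_succ]
      simp [Fin.succAbove_zero, Fin.tail]
    calc ∫⁻ u, ∏ r : Fin (m+1), f (u r) ∂(Measure.pi fun _ : Fin (m+1) => μ₁)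
        = ∫⁻ u, g (MeasurableEquiv.piFinSuccAbove (fun _ : Fin (m+1) => α) 0 u)
            ∂(Measure.pi fun _ : Fin (m+1) => μ₁) := by
          apply lintegral_congr; intro u; rw [hcomp]
      _ = ∫⁻ p, g p ∂(μ₁.prod (Measure.pi fun _ : Fin m => μ₁)) := hmp.lintegral_comp hgm
      _ = (∫⁻ a, f a ∂μ₁) * ∫⁻ u, ∏ r : Fin m, f (u r) ∂(Measure.pi fun _ : Fin m => μ₁) := by
          rw [hg]
          exact lintegral_prod_mul (hf.comp measurable_id).aemeasurable
            (Finset.measurable_prod Finset.univ (fun r _ =>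
              hf.comp (measurable_pi_apply r))).aemeasurable
      _ = (∫⁻ a, f a ∂μ₁) ^ (m+1) := by rw [ih]; ring

open Classical in
/-- Chernoff-type bound for a sum of iid indicators. -/
lemma chernoff {α : Type*} [MeasurableSpace α] (μ₁ : Measure α) [IsProbabilityMeasure μ₁]
    (S : Set α) (hS : MeasurableSet S) (q : ℝ) (hq : 0 ≤ q)
    (hp : μ₁ S ≤ ENNReal.ofReal q) (m : ℕ) (T : ℝ) :
    (Measure.pi fun _ : Fin m => μ₁)
        {u | T < ∑ r : Fin m, (if u r ∈ S then (1:ℝ) else 0)}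
      ≤ ENNReal.ofReal (Real.exp (-T + 2*q*m)) := by
  classical
  set Z : α → ℝ := fun a => if a ∈ S then (1:ℝ) else 0 with hZ
  set f : α → ℝ≥0∞ := fun a => ENNReal.ofReal (Real.exp (Z a)) with hf
  have hZm : Measurable Z := Measurable.ite hS measurable_const measurable_const
  have hfm : Measurable f := (hZm.exp).ennreal_ofReal
  set A : Set (Fin m → α) := {u | T < ∑ r : Fin m, Z (u r)} with hA
  have hAm : MeasurableSet A := by
    apply measurableSet_lt measurable_const
    exact Finset.measurable_sum Finset.univ fun r _ => hZm.comp (measurable_pi_apply r)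
  have step1 : (Measure.pi fun _ : Fin m => μ₁) A
      ≤ ∫⁻ u, ENNReal.ofReal (Real.exp (-T)) * ∏ r : Fin m, f (u r)
          ∂(Measure.pi fun _ : Fin m => μ₁) := by
    have hpt : ∀ u, A.indicator (fun _ => (1:ℝ≥0∞)) u
        ≤ ENNReal.ofReal (Real.exp (-T)) * ∏ r : Fin m, f (u r) := by
      intro u
      by_cases hu : u ∈ A
      · rw [Set.indicator_of_mem hu]
        have hprod : ∏ r : Fin m, f (u r)
            = ENNReal.ofReal (Real.exp (∑ r : Fin m, Z (u r))) := by
          rw [Real.exp_sum, ← ENNReal.ofReal_prod_of_nonneg]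
          intro r _; positivity
        rw [hprod, ← ENNReal.ofReal_mul (by positivity), ← Real.exp_add]
        rw [show (1:ℝ≥0∞) = ENNReal.ofReal 1 by simp]
        apply ENNReal.ofReal_le_ofReal
        rw [Real.one_le_exp_iff]
        have := hu
        rw [hA, Set.mem_setOf_eq] at this
        linarith
      · rw [Set.indicator_of_notMem hu]
        exact zero_le
    calc (Measure.pi fun _ : Fin m => μ₁) A
        = ∫⁻ u, A.indicator (fun _ => (1:ℝ≥0∞)) u ∂(Measure.pi fun _ : Fin m => μ₁) := by
          rw [lintegral_indicator hAm]; simp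
      _ ≤ _ := lintegral_mono hpt
  have hone : (1:ℝ) ≤ Real.exp 1 := by
    rw [Real.one_le_exp_iff]; norm_num
  have step2 : ∫⁻ a, f a ∂μ₁ ≤ ENNReal.ofReal (Real.exp (2*q)) := by
    have hfeq : ∀ a, f a = 1 + S.indicator (fun _ => ENNReal.ofReal (Real.exp 1 - 1)) a := by
      intro a
      by_cases ha : a ∈ S
      · simp only [hf, hZ, if_pos ha, Set.indicator_of_mem ha]
        rw [← ENNReal.ofReal_one, ← ENNReal.ofReal_add (by norm_num) (by linarith)]
        congr 1; ring
      · simp [hf, hZ, ha]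
    calc ∫⁻ a, f a ∂μ₁
        = ∫⁻ a, (1 + S.indicator (fun _ => ENNReal.ofReal (Real.exp 1 - 1)) a) ∂μ₁ :=
          lintegral_congr hfeq
      _ = 1 + ENNReal.ofReal (Real.exp 1 - 1) * μ₁ S := by
          rw [lintegral_add_left measurable_const, lintegral_indicator hS]
          simp [measure_univ]
      _ ≤ 1 + ENNReal.ofReal (Real.exp 1 - 1) * ENNReal.ofReal q := by
          exact add_le_add le_rfl (mul_le_mul_right hp _)
      _ = ENNReal.ofReal (1 + (Real.exp 1 - 1) * q) := by
          rw [← ENNReal.ofReal_mul (by linarith), ← ENNReal.ofReal_one,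
            ← ENNReal.ofReal_add (by norm_num) (mul_nonneg (by linarith) hq)]
      _ ≤ ENNReal.ofReal (Real.exp (2*q)) := by
          apply ENNReal.ofReal_le_ofReal
          have he3 : Real.exp 1 - 1 ≤ 2 := by
            nlinarith [Real.exp_one_lt_d9]
          have h1 : 1 + (Real.exp 1 - 1) * q ≤ 1 + 2*q := by nlinarith
          have h2 : 2*q + 1 ≤ Real.exp (2*q) := Real.add_one_le_exp _
          linarith
  have hprodm : Measurable fun u : Fin m → α => ∏ r : Fin m, f (u r) :=
    Finset.measurable_prod Finset.univ fun r _ => hfm.comp (measurable_pi_apply r)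
  calc (Measure.pi fun _ : Fin m => μ₁) {u | T < ∑ r : Fin m, (if u r ∈ S then (1:ℝ) else 0)}
      ≤ ∫⁻ u, ENNReal.ofReal (Real.exp (-T)) * ∏ r : Fin m, f (u r)
          ∂(Measure.pi fun _ : Fin m => μ₁) := step1
    _ = ENNReal.ofReal (Real.exp (-T)) *
          ∫⁻ u, ∏ r : Fin m, f (u r) ∂(Measure.pi fun _ : Fin m => μ₁) := by
        rw [lintegral_const_mul _ hprodm]
    _ = ENNReal.ofReal (Real.exp (-T)) * (∫⁻ a, f a ∂μ₁) ^ m := by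
        rw [lintegral_pi_prod μ₁ f hfm m]
    _ ≤ ENNReal.ofReal (Real.exp (-T)) * (ENNReal.ofReal (Real.exp (2*q))) ^ m :=
        mul_le_mul_right (pow_le_pow_left' step2 m) _
    _ = ENNReal.ofReal (Real.exp (-T + 2*q*m)) := by
        rw [← ENNReal.ofReal_pow (by positivity), ← ENNReal.ofReal_mul (by positivity),
          ← Real.exp_nat_mul, ← Real.exp_add]
        congr 1
        ring

lemma abs_dot_le {d : ℕ} (u v : Fin d → ℝ) : |dot u v| ≤ norm2 u * norm2 v := by
  rw [dot, norm2, norm2]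
  calc |∑ i, u i * v i| = Real.sqrt ((∑ i, u i * v i)^2) := (Real.sqrt_sq_eq_abs _).symm
    _ ≤ Real.sqrt ((∑ i, u i ^ 2) * (∑ i, v i ^ 2)) :=
        Real.sqrt_le_sqrt (Finset.sum_mul_sq_le_sq_mul_sq _ _ _)
    _ = Real.sqrt (∑ i, u i ^ 2) * Real.sqrt (∑ i, v i ^ 2) :=
        Real.sqrt_mul (Finset.sum_nonneg fun i _ => sq_nonneg _) _

/-- **Perturbation of the gradient feature matrix `J`** (inside Lemma D.8).  In the
`σ`-scaled setting, if all local weights stay within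
`R = C n √(log(m/δ) log²(n/δ))/(λ√m)` of the initialization, then with probability at
least `1 − n exp(−m(R/σ + δ)/10)`,
`‖J(k,t) − J(0,0)‖_F ≤ O(n(δ + n√(log(m/δ) log²(n/δ))/(σλ√m)))^{1/2}`. -/
theorem J_matrix_perturbation :
    ∃ C C' : ℝ, 0 < C ∧ 0 < C' ∧
    ∀ (d m n N : ℕ) (σ δ : ℝ)
      (Ω : Type) [MeasureSpace Ω] [IsProbabilityMeasure (ℙ : Measure Ω)]
      (x : Fin n → Fin d → ℝ) (S : Fin n → Fin N)
      (a : Ω → Fin m → ℝ) (u0 : Ω → Fin m → Fin d → ℝ)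
      (w : Ω → Fin N → Fin m → Fin d → ℝ),
      0 < m → 0 < n → 0 < σ → 0 < δ → δ < 1 →
      (∀ i, norm2 (x i) = 1) →
      0 < eigMin (Hinf d n x) →
      -- random initialization `u_r(0) ~ N(0, σ² I_d)` i.i.d., signs uniform on `{±1}`
      (Measure.map (fun ω => (u0 ω, a ω)) ℙ =
        (iidScaledGaussian m d σ).prod (iidSign m)) →
      -- local weights stay `R`-close to initialization, with
      -- `R = C n √(log(m/δ)·log²(n/δ))/(λ√m)`
      (∀ ω c r, norm2 (fun i => w ω c r i - u0 ω r i) ≤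
        C * n * Real.sqrt (Real.log (m / δ) * Real.log (n / δ) ^ 2) /
          (eigMin (Hinf d n x) * Real.sqrt m)) →
      ENNReal.ofReal (1 - (n : ℝ) *
          Real.exp (-((m : ℝ) *
            (C * n * Real.sqrt (Real.log (m / δ) * Real.log (n / δ) ^ 2) /
              (eigMin (Hinf d n x) * Real.sqrt m) / σ + δ)) / 10)) ≤
        ℙ {ω |
          frobG (Jmat m n (a ω) x (fun i r => w ω (S i) r) -
              Jmat m n (a ω) x (fun _ r => u0 ω r)) ≤
            Real.sqrt (C' * n *
              (δ + n * Real.sqrt (Real.log (m / δ) * Real.log (n / δ) ^ 2) /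
                (σ * eigMin (Hinf d n x) * Real.sqrt m)))} := by
  classical
  refine ⟨1, 3, one_pos, by norm_num, ?_⟩
  intro d m n N σ δ Ω _ _ x S a u0 w hm hn hσ hδ hδ1 hx hlam hmap hw
  set lam := eigMin (Hinf d n x) with hlam_def
  set alp := Real.sqrt (Real.log (↑m / δ) * Real.log (↑n / δ) ^ 2) with halp_def
  set R : ℝ := 1 * ↑n * alp / (lam * Real.sqrt ↑m) with hR_def
  set tau : ℝ := ↑n * alp / (σ * lam * Real.sqrt ↑m) with htau_def
  have hm1 : (1:ℝ) ≤ (m:ℝ) := by exact_mod_cast hm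
  have hn1 : (1:ℝ) ≤ (n:ℝ) := by exact_mod_cast hn
  have hsm : 0 < Real.sqrt (m:ℝ) := Real.sqrt_pos.mpr (by linarith)
  have halp : 0 < alp := by
    rw [halp_def]
    apply Real.sqrt_pos.mpr
    have h1 : 0 < Real.log ((m:ℝ) / δ) := Real.log_pos ((one_lt_div hδ).mpr (by linarith))
    have h2 : 0 < Real.log ((n:ℝ) / δ) := Real.log_pos ((one_lt_div hδ).mpr (by linarith))
    positivity
  have hR0 : 0 ≤ R := by
    rw [hR_def]
    positivity
  have htau : 0 < tau := by
    rw [htau_def]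
    positivity
  have hRστ : R / σ = tau := by
    rw [hR_def, htau_def]
    field_simp
  -- probability measure instances
  haveI hprob_pm : IsProbabilityMeasure pmUniform := by
    constructor
    simp [pmUniform, ENNReal.smul_def, mul_one]
    exact ENNReal.inv_two_add_inv_two
  haveI hprob_sg : IsProbabilityMeasure (scaledGaussianPi d σ) := by
    unfold scaledGaussianPi; infer_instance
  haveI hprob_iidg : IsProbabilityMeasure (iidScaledGaussian m d σ) := by
    unfold iidScaledGaussian; infer_instance
  haveI hprob_sign : IsProbabilityMeasure (iidSign m) := by
    unfold iidSign; infer_instance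
  -- a.e.-measurability of the initialization
  have hpair : AEMeasurable (fun ω => (u0 ω, a ω)) ℙ := by
    by_contra h
    have h0 := Measure.map_of_not_aemeasurable h
    rw [hmap] at h0
    haveI : IsProbabilityMeasure ((iidScaledGaussian m d σ).prod (iidSign m)) := by
      infer_instance
    exact (IsProbabilityMeasure.ne_zero ((iidScaledGaussian m d σ).prod (iidSign m))) h0
  have hu0m : AEMeasurable u0 ℙ := measurable_fst.comp_aemeasurable hpair
  have ham : AEMeasurable a ℙ := measurable_snd.comp_aemeasurable hpair
  have hu0law : Measure.map u0 ℙ = iidScaledGaussian m d σ := by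
    have h1 : (Measure.map (fun ω => (u0 ω, a ω)) ℙ).map Prod.fst = Measure.map u0 ℙ := by
      rw [AEMeasurable.map_map_of_aemeasurable measurable_fst.aemeasurable hpair]
      rfl
    rw [hmap] at h1
    rw [← h1, Measure.map_fst_prod]
    simp
  have halaw : Measure.map a ℙ = iidSign m := by
    have h1 : (Measure.map (fun ω => (u0 ω, a ω)) ℙ).map Prod.snd = Measure.map a ℙ := by
      rw [AEMeasurable.map_map_of_aemeasurable measurable_snd.aemeasurable hpair]
      rfl
    rw [hmap] at h1
    rw [← h1, Measure.map_snd_prod]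
    simp
  -- the slab sets
  set Si : Fin n → Set (Fin d → ℝ) := fun i => {v | |dot v (x i)| ≤ R} with hSi_def
  have hdotm : ∀ i, Measurable (fun v : Fin d → ℝ => dot v (x i)) := by
    intro i
    unfold dot
    exact Finset.measurable_sum _ fun j _ => (measurable_pi_apply j).mul_const _
  have hSim : ∀ i, MeasurableSet (Si i) :=
    fun i => measurableSet_le (hdotm i).abs measurable_const
  have hx2 : ∀ i, ∑ j, (x i j)^2 = 1 := by
    intro i
    have h1 := hx i
    rw [norm2] at h1
    have h2 := congrArg (· ^ 2) h1
    simp only [one_pow] at h2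
    rwa [Real.sq_sqrt (Finset.sum_nonneg fun j _ => sq_nonneg _)] at h2
  have hlawdot : ∀ i, (scaledGaussianPi d σ).map (fun v => dot v (x i))
      = gaussianReal 0 (Real.toNNReal (σ^2)) := by
    intro i
    have hfun : (fun v : Fin d → ℝ => dot v (x i)) = fun v => ∑ j, x i j * v j := by
      funext v
      rw [dot]
      exact Finset.sum_congr rfl fun j _ => mul_comm _ _
    rw [hfun]
    unfold scaledGaussianPi
    rw [gauss_lin d (x i) (Real.toNNReal (σ^2)), hx2 i]
    norm_num
  have hslab : ∀ i, scaledGaussianPi d σ (Si i) ≤ ENNReal.ofReal tau := by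
    intro i
    have hpre : Si i = (fun v => dot v (x i)) ⁻¹' {z : ℝ | |z| ≤ R} := rfl
    rw [hpre, ← Measure.map_apply (hdotm i)
      (measurableSet_le measurable_abs measurable_const), hlawdot i]
    have hvne : Real.toNNReal (σ^2) ≠ 0 := by
      simp only [ne_eq, Real.toNNReal_eq_zero, not_le]
      positivity
    calc gaussianReal 0 (Real.toNNReal (σ^2)) {z | |z| ≤ R}
        ≤ ENNReal.ofReal (R / Real.sqrt (Real.toNNReal (σ^2))) := gauss_slab hvne hR0
      _ = ENNReal.ofReal tau := by
          rw [Real.coe_toNNReal _ (sq_nonneg σ), Real.sqrt_sq hσ.le, hRστ]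
  -- Chernoff bound per example
  set T : ℝ := ↑m * (3*(δ + tau)) with hT_def
  set A : Fin n → Set (Fin m → Fin d → ℝ) :=
    fun i => {u | T < ∑ r : Fin m, (if u r ∈ Si i then (1:ℝ) else 0)} with hA_def
  have hAbound : ∀ i, iidScaledGaussian m d σ (A i)
      ≤ ENNReal.ofReal (Real.exp (-(↑m * (tau + δ))/10)) := by
    intro i
    calc iidScaledGaussian m d σ (A i)
        ≤ ENNReal.ofReal (Real.exp (-T + 2*tau*m)) := by
          have := chernoff (scaledGaussianPi d σ) (Si i) (hSim i) tau htau.le (hslab i) m T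
          unfold iidScaledGaussian
          rw [hA_def]
          convert this using 2
      _ ≤ ENNReal.ofReal (Real.exp (-(↑m * (tau + δ))/10)) := by
          apply ENNReal.ofReal_le_ofReal
          apply Real.exp_le_exp.mpr
          have hm0 : (0:ℝ) ≤ m := Nat.cast_nonneg m
          rw [hT_def]
          nlinarith [htau.le, hδ.le]
  have hAmeas : ∀ i, MeasurableSet (A i) := by
    intro i
    apply measurableSet_lt measurable_const
    apply Finset.measurable_sum
    intro r _
    exact (Measurable.ite (hSim i) measurable_const measurable_const).comp
      (measurable_pi_apply r)
  set B : Set (Fin m → Fin d → ℝ) := ⋃ i, A i with hB_def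
  have hBmeas : MeasurableSet B := MeasurableSet.iUnion hAmeas
  have hB : iidScaledGaussian m d σ B
      ≤ ENNReal.ofReal (↑n * Real.exp (-(↑m * (tau + δ))/10)) := by
    calc iidScaledGaussian m d σ B ≤ ∑' i, iidScaledGaussian m d σ (A i) := measure_iUnion_le _
      _ = ∑ i : Fin n, iidScaledGaussian m d σ (A i) := tsum_fintype _
      _ ≤ ∑ _i : Fin n, ENNReal.ofReal (Real.exp (-(↑m * (tau + δ))/10)) :=
          Finset.sum_le_sum fun i _ => hAbound i
      _ = (n:ℝ≥0∞) * ENNReal.ofReal (Real.exp (-(↑m * (tau + δ))/10)) := by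
          rw [Finset.sum_const, Finset.card_univ, Fintype.card_fin, nsmul_eq_mul]
      _ = ENNReal.ofReal (↑n * Real.exp (-(↑m * (tau + δ))/10)) := by
          rw [← ENNReal.ofReal_natCast n, ← ENNReal.ofReal_mul (Nat.cast_nonneg n)]
  -- sign event
  set Ea : Set (Fin m → ℝ) := Set.univ.pi (fun _ : Fin m => ({1, -1} : Set ℝ)) with hEa_def
  have hEam : MeasurableSet Ea :=
    MeasurableSet.univ_pi fun r =>
      (measurableSet_singleton (1:ℝ)).union (measurableSet_singleton (-1:ℝ))
  have hEa1 : iidSign m Ea = 1 := by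
    unfold iidSign
    rw [hEa_def, Measure.pi_pi]
    have h1 : pmUniform ({1, -1} : Set ℝ) = 1 := by
      have hms : MeasurableSet ({1, -1} : Set ℝ) :=
        (measurableSet_singleton (1:ℝ)).union (measurableSet_singleton (-1:ℝ))
      rw [pmUniform]
      rw [Measure.add_apply, Measure.smul_apply, Measure.smul_apply,
        Measure.dirac_apply' _ hms, Measure.dirac_apply' _ hms]
      simp only [Set.indicator_of_mem (by simp : (1:ℝ) ∈ ({1,-1} : Set ℝ)),
        Set.indicator_of_mem (by simp : (-1:ℝ) ∈ ({1,-1} : Set ℝ)), Pi.one_apply]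
      simp [ENNReal.smul_def, mul_one]
      exact ENNReal.inv_two_add_inv_two
    simp [h1]
  have haEa : ℙ (a ⁻¹' Ea) = 1 := by
    rw [← Measure.map_apply_of_aemeasurable ham hEam, halaw, hEa1]
  have haEac : ℙ ((a ⁻¹' Ea)ᶜ) = 0 := by
    have hnm : NullMeasurableSet (a ⁻¹' Ea) ℙ := ham.nullMeasurable hEam
    rw [measure_compl₀ hnm (measure_ne_top _ _), haEa, measure_univ, tsub_self]
  have hu0B : ℙ (u0 ⁻¹' B) ≤ ENNReal.ofReal (↑n * Real.exp (-(↑m * (tau + δ))/10)) := by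
    rw [← Measure.map_apply_of_aemeasurable hu0m hBmeas, hu0law]
    exact hB
  -- the good event
  set G : Set Ω := (u0 ⁻¹' B)ᶜ ∩ (a ⁻¹' Ea) with hG_def
  have hGsub : G ⊆ {ω | frobG (Jmat m n (a ω) x (fun i r => w ω (S i) r) -
      Jmat m n (a ω) x (fun _ r => u0 ω r)) ≤
        Real.sqrt (3 * ↑n * (δ + tau))} := by
    rintro ω ⟨hωB, hωa⟩
    simp only [Set.mem_setOf_eq]
    rw [frobG]
    apply Real.sqrt_le_sqrt
    have ha2 : ∀ r, (a ω r)^2 = 1 := by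
      intro r
      have := hωa r (Set.mem_univ r)
      rcases this with h | h <;> rw [h] <;> norm_num
    have hsqm : ((Real.sqrt (m:ℝ))⁻¹)^2 = (m:ℝ)⁻¹ := by
      rw [inv_pow, Real.sq_sqrt (Nat.cast_nonneg m)]
    set M := Jmat m n (a ω) x (fun i r => w ω (S i) r) -
        Jmat m n (a ω) x (fun _ r => u0 ω r) with hM_def
    set Δ : Fin n → Fin m → ℝ := fun i r =>
      posInd (dot (w ω (S i) r) (x i)) - posInd (dot (u0 ω r) (x i)) with hΔ_def
    have hMentry : ∀ (p : Fin m × Fin d) (i : Fin n),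
        (M p i)^2 = (m:ℝ)⁻¹ * (a ω p.1)^2 * (Δ i p.1)^2 * (x i p.2)^2 := by
      intro p i
      rw [hM_def, Matrix.sub_apply]
      unfold Jmat
      rw [hΔ_def]
      have : ((Real.sqrt (m:ℝ))⁻¹ * a ω p.1 * x i p.2 * posInd (dot (w ω (S i) p.1) (x i)) -
          (Real.sqrt (m:ℝ))⁻¹ * a ω p.1 * x i p.2 * posInd (dot (u0 ω p.1) (x i)))^2
          = ((Real.sqrt (m:ℝ))⁻¹)^2 * (a ω p.1)^2 *
            (posInd (dot (w ω (S i) p.1) (x i)) - posInd (dot (u0 ω p.1) (x i)))^2 *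
            (x i p.2)^2 := by ring
      rw [this, hsqm]
    have hΔbound : ∀ i r, (Δ i r)^2 ≤ (if u0 ω r ∈ Si i then (1:ℝ) else 0) := by
      intro i r
      by_cases hmem : u0 ω r ∈ Si i
      · rw [if_pos hmem]
        simp only [hΔ_def]
        unfold posInd
        split <;> split <;> norm_num
      · rw [if_neg hmem]
        have hclose : |dot (w ω (S i) r) (x i) - dot (u0 ω r) (x i)| ≤ R := by
          have hsub : dot (w ω (S i) r) (x i) - dot (u0 ω r) (x i)
              = dot (fun j => w ω (S i) r j - u0 ω r j) (x i) := by
            unfold dot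
            rw [← Finset.sum_sub_distrib]
            exact Finset.sum_congr rfl fun j _ => by ring
          rw [hsub]
          calc |dot (fun j => w ω (S i) r j - u0 ω r j) (x i)|
              ≤ norm2 (fun j => w ω (S i) r j - u0 ω r j) * norm2 (x i) := abs_dot_le _ _
            _ = norm2 (fun j => w ω (S i) r j - u0 ω r j) := by rw [hx i, mul_one]
            _ ≤ R := hw ω (S i) r
        have hfar : R < |dot (u0 ω r) (x i)| := by
          rw [hSi_def] at hmem
          simpa using not_le.mp hmem
        have habs := abs_le.mp hclose
        have hZ : Δ i r = 0 := by
          simp only [hΔ_def]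
          rcases lt_abs.mp hfar with hgt | hgt
          · have h1 : 0 ≤ dot (u0 ω r) (x i) := by linarith
            have h2 : 0 ≤ dot (w ω (S i) r) (x i) := by linarith
            unfold posInd
            rw [if_pos h1, if_pos h2]
            ring
          · have h1 : ¬ (0 ≤ dot (u0 ω r) (x i)) := by linarith
            have h2 : ¬ (0 ≤ dot (w ω (S i) r) (x i)) := by linarith
            unfold posInd
            rw [if_neg h1, if_neg h2]
            ring
        rw [hZ]
        norm_num
    have key : ∀ i : Fin n, ∑ p : Fin m × Fin d, (M p i)^2 ≤ 3*(δ + tau) := by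
      intro i
      have hZsum : ∑ r : Fin m, (if u0 ω r ∈ Si i then (1:ℝ) else 0) ≤ T := by
        by_contra hcon
        exact hωB (Set.mem_iUnion.mpr ⟨i, not_le.mp hcon⟩)
      calc ∑ p : Fin m × Fin d, (M p i)^2
          = ∑ r : Fin m, ∑ j : Fin d, (M (r, j) i)^2 := by rw [Fintype.sum_prod_type]
        _ = ∑ r : Fin m, (m:ℝ)⁻¹ * (a ω r)^2 * (Δ i r)^2 * (∑ j : Fin d, (x i j)^2) := by
            apply Finset.sum_congr rfl
            intro r _
            rw [Finset.mul_sum]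
            exact Finset.sum_congr rfl fun j _ => hMentry (r, j) i
        _ = ∑ r : Fin m, (m:ℝ)⁻¹ * (Δ i r)^2 := by
            apply Finset.sum_congr rfl
            intro r _
            rw [ha2 r, hx2 i]
            ring
        _ ≤ ∑ r : Fin m, (m:ℝ)⁻¹ * (if u0 ω r ∈ Si i then (1:ℝ) else 0) := by
            apply Finset.sum_le_sum
            intro r _
            exact mul_le_mul_of_nonneg_left (hΔbound i r) (by positivity)
        _ = (m:ℝ)⁻¹ * ∑ r : Fin m, (if u0 ω r ∈ Si i then (1:ℝ) else 0) := by
            rw [← Finset.mul_sum]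
        _ ≤ (m:ℝ)⁻¹ * T := by
            exact mul_le_mul_of_nonneg_left hZsum (by positivity)
        _ = 3*(δ + tau) := by
            rw [hT_def]
            field_simp
    calc ∑ p : Fin m × Fin d, ∑ i : Fin n, (M p i)^2
        = ∑ i : Fin n, ∑ p : Fin m × Fin d, (M p i)^2 := Finset.sum_comm
      _ ≤ ∑ _i : Fin n, 3*(δ + tau) := Finset.sum_le_sum fun i _ => key i
      _ = ↑n * (3*(δ + tau)) := by
          rw [Finset.sum_const, Finset.card_univ, Fintype.card_fin, nsmul_eq_mul]
      _ = 3 * ↑n * (δ + tau) := by ring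
  -- putting the probability bounds together
  have hGc : ℙ Gᶜ ≤ ENNReal.ofReal (↑n * Real.exp (-(↑m * (tau + δ))/10)) := by
    rw [hG_def, Set.compl_inter, compl_compl]
    calc ℙ ((u0 ⁻¹' B) ∪ (a ⁻¹' Ea)ᶜ) ≤ ℙ (u0 ⁻¹' B) + ℙ ((a ⁻¹' Ea)ᶜ) := measure_union_le _ _
      _ = ℙ (u0 ⁻¹' B) := by rw [haEac, add_zero]
      _ ≤ _ := hu0B
  have hsplit : (1:ℝ≥0∞) ≤ ℙ G + ℙ Gᶜ := by
    calc (1:ℝ≥0∞) = ℙ Set.univ := (measure_univ).symm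
      _ = ℙ (G ∪ Gᶜ) := by rw [Set.union_compl_self]
      _ ≤ ℙ G + ℙ Gᶜ := measure_union_le _ _
  have hG1 : 1 - ENNReal.ofReal (↑n * Real.exp (-(↑m * (tau + δ))/10)) ≤ ℙ G := by
    calc 1 - ENNReal.ofReal (↑n * Real.exp (-(↑m * (tau + δ))/10))
        ≤ 1 - ℙ Gᶜ := tsub_le_tsub le_rfl hGc
      _ ≤ ℙ G := tsub_le_iff_right.mpr hsplit
  have hexpeq : R / σ + δ = tau + δ := by rw [hRστ]
  calc ENNReal.ofReal (1 - ↑n * Real.exp (-(↑m * (R / σ + δ))/10))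
      = 1 - ENNReal.ofReal (↑n * Real.exp (-(↑m * (R / σ + δ))/10)) := by
        rw [ENNReal.ofReal_sub _ (by positivity), ENNReal.ofReal_one]
    _ = 1 - ENNReal.ofReal (↑n * Real.exp (-(↑m * (tau + δ))/10)) := by rw [hexpeq]
    _ ≤ ℙ G := hG1
    _ ≤ ℙ {ω | frobG (Jmat m n (a ω) x (fun i r => w ω (S i) r) -
          Jmat m n (a ω) x (fun _ r => u0 ω r)) ≤
            Real.sqrt (3 * ↑n * (δ + tau))} := measure_mono hGsub

end
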